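/- arXiv:2506.03417 — 2 statements merged into one kernel-verified Lean document; each statement's English description precedes it below -/
import Mathlib

section
/- Let n ≥ 2 and θ ∈ (0, π), and let u : ℝⁿ → ℝ be smooth on the closed half-space {x₁ ≥ 0} and satisfy the capillary boundary condition ∂₁u(x) = −cos θ · √(1+|Du(x)|²) for every x ∈ ∂ℝⁿ₊. Define v(x) = √(1+|Du(x)|²) + cos θ · ∂₁u(x). Then for every x ∈ ∂ℝⁿ₊ one has Σ_{j=1}^{n} (δ_{1j} − ∂₁u(x)·∂ⱼu(x)/(1+|Du(x)|²)) · ∂ⱼv(x) = 0; equivalently, (1 + Σ_{i=2}^{n}(∂ᵢu(x))²)·∂₁v(x) = ∂₁u(x)·Σ_{i=2}^{n} ∂ᵢu(x)·∂ᵢv(x), i.e. the derivative of v in the direction of the outward unit co-normal of the boundary of the graph of u vanishes. -/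
open Real Set
open scoped RealInnerProductSpace

noncomputable section

/-- The closed upper half-space in `ℝⁿ`. -/
def closedHalf (n : ℕ) [NeZero n] : Set (EuclideanSpace ℝ (Fin n)) :=
  {x : EuclideanSpace ℝ (Fin n) | 0 ≤ x 0}

/-- `i`-th partial derivative of `f`, computed within the closed upper half-space. -/
def pd (n : ℕ) [NeZero n] (f : EuclideanSpace ℝ (Fin n) → ℝ) (i : Fin n)
    (x : EuclideanSpace ℝ (Fin n)) : ℝ :=
  fderivWithin ℝ f (closedHalf n) x (EuclideanSpace.single i 1)

/-- Squared Euclidean norm of the gradient `Du`. -/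
def gradSq (n : ℕ) [NeZero n] (f : EuclideanSpace ℝ (Fin n) → ℝ)
    (x : EuclideanSpace ℝ (Fin n)) : ℝ :=
  ∑ i : Fin n, (pd n f i x) ^ 2

/-- Euclidean norm of the gradient `|Du|`. -/
def gradNorm (n : ℕ) [NeZero n] (f : EuclideanSpace ℝ (Fin n) → ℝ)
    (x : EuclideanSpace ℝ (Fin n)) : ℝ :=
  Real.sqrt (gradSq n f x)

/-- The area element `W = √(1+|Du|²)`. -/
def Wel (n : ℕ) [NeZero n] (f : EuclideanSpace ℝ (Fin n) → ℝ)
    (x : EuclideanSpace ℝ (Fin n)) : ℝ :=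
  Real.sqrt (1 + gradSq n f x)

/-- `u` is a capillary minimal graph with angle `θ` over the open upper half-space:
`u` is smooth on the closed half-space, satisfies the minimal surface equation
`div (Du/√(1+|Du|²)) = 0` on `{x₁ > 0}`, and the capillary boundary condition
`∂₁u = -cos θ · √(1+|Du|²)` on `{x₁ = 0}`. -/
def IsCapillaryMinimalGraph (n : ℕ) [NeZero n] (θ : ℝ)
    (u : EuclideanSpace ℝ (Fin n) → ℝ) : Prop :=
  ContDiffOn ℝ (⊤ : ℕ∞) u (closedHalf n) ∧
  (∀ x : EuclideanSpace ℝ (Fin n), 0 < x 0 →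
      ∑ i : Fin n,
        fderivWithin ℝ (fun y => pd n u i y / Wel n u y) (closedHalf n) x
          (EuclideanSpace.single i 1) = 0) ∧
  (∀ x : EuclideanSpace ℝ (Fin n), x 0 = 0 →
      pd n u 0 x = -Real.cos θ * Wel n u x)

/-- `u` has linear growth on the upper half-space. -/
def HasLinearGrowth (n : ℕ) [NeZero n] (u : EuclideanSpace ℝ (Fin n) → ℝ) : Prop :=
  ∃ C₀ > (0 : ℝ), ∀ x : EuclideanSpace ℝ (Fin n), 0 < x 0 → |u x| ≤ C₀ * (1 + ‖x‖)

/-- `u x = ⟨a, x⟩ + b` on the closed half-space, for some `a ∈ ℝⁿ`, `b ∈ ℝ`. -/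
def IsAffineOnHalf (n : ℕ) [NeZero n] (u : EuclideanSpace ℝ (Fin n) → ℝ) : Prop :=
  ∃ (a : EuclideanSpace ℝ (Fin n)) (b : ℝ),
    ∀ x : EuclideanSpace ℝ (Fin n), 0 ≤ x 0 → u x = ⟪a, x⟫ + b

end

section AuxUG

variable {n : ℕ} [NeZero n]

lemma convex_closedHalf : Convex ℝ (closedHalf n) :=
  convex_halfSpace_ge ⟨fun a b => by simp [closedHalf], fun c a => by simp⟩ 0

lemma interior_half_sub : {x : EuclideanSpace ℝ (Fin n) | 0 < x 0} ⊆ interior (closedHalf n) := by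
  have hop : IsOpen {x : EuclideanSpace ℝ (Fin n) | 0 < x 0} :=
    isOpen_lt continuous_const ((continuous_apply (0 : Fin n)).comp (EuclideanSpace.equiv (Fin n) ℝ).continuous)
  exact hop.subset_interior_iff.2 (fun x hx => (le_of_lt hx : (0:ℝ) ≤ x 0))

lemma uniqueDiffOn_closedHalf : UniqueDiffOn ℝ (closedHalf n) := by
  apply uniqueDiffOn_convex convex_closedHalf
  exact ⟨EuclideanSpace.single 0 1, interior_half_sub (by simp)⟩

lemma mem_closure_interior_closedHalf {x : EuclideanSpace ℝ (Fin n)} (hx : x ∈ closedHalf n) :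
    x ∈ closure (interior (closedHalf n)) := by
  apply closure_mono interior_half_sub
  apply mem_closure_iff_seq_limit.2
  refine ⟨fun k => x + ((k:ℝ)+1)⁻¹ • EuclideanSpace.single 0 1, fun k => ?_, ?_⟩
  · simp only [mem_setOf_eq]
    have : (x + ((k:ℝ)+1)⁻¹ • EuclideanSpace.single (0:Fin n) (1:ℝ)) 0 = x 0 + ((k:ℝ)+1)⁻¹ := by
      simp [EuclideanSpace.single_apply]
    rw [this]
    have := hx
    simp only [closedHalf, mem_setOf_eq] at this
    positivity
  · have : Filter.Tendsto (fun k : ℕ => ((k:ℝ)+1)⁻¹ • (EuclideanSpace.single 0 1 : EuclideanSpace ℝ (Fin n))) Filter.atTop (nhds (0 : EuclideanSpace ℝ (Fin n))) := by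
      rw [show (0 : EuclideanSpace ℝ (Fin n)) = (0:ℝ) • EuclideanSpace.single 0 1 by simp]
      exact (tendsto_one_div_add_atTop_nhds_zero_nat.congr (by simp [one_div])).smul_const _
    simpa using Filter.Tendsto.const_add x this

variable {u : EuclideanSpace ℝ (Fin n) → ℝ}

lemma pd_contDiffOn (hu : ContDiffOn ℝ (⊤ : ℕ∞) u (closedHalf n)) (i : Fin n) :
    ContDiffOn ℝ (⊤ : ℕ∞) (pd n u i) (closedHalf n) := by
  have h1 : ContDiffOn ℝ (⊤ : ℕ∞) (fderivWithin ℝ u (closedHalf n)) (closedHalf n) :=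
    hu.fderivWithin uniqueDiffOn_closedHalf (by exact_mod_cast le_top)
  exact (ContinuousLinearMap.apply ℝ ℝ (EuclideanSpace.single i 1)).contDiff.comp_contDiffOn h1

lemma one_add_gradSq_pos (x : EuclideanSpace ℝ (Fin n)) : 0 < 1 + gradSq n u x := by
  have : 0 ≤ gradSq n u x := Finset.sum_nonneg fun i _ => sq_nonneg _
  linarith

lemma Wel_pos (x : EuclideanSpace ℝ (Fin n)) : 0 < Wel n u x :=
  Real.sqrt_pos.2 (one_add_gradSq_pos x)

lemma Wel_sq (x : EuclideanSpace ℝ (Fin n)) : (Wel n u x) ^ 2 = 1 + gradSq n u x :=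
  Real.sq_sqrt (one_add_gradSq_pos x).le

lemma pd_diff (hu : ContDiffOn ℝ (⊤ : ℕ∞) u (closedHalf n)) (i : Fin n)
    {x : EuclideanSpace ℝ (Fin n)} (hx : x ∈ closedHalf n) :
    HasFDerivWithinAt (pd n u i) (fderivWithin ℝ (pd n u i) (closedHalf n) x)
      (closedHalf n) x :=
  (((pd_contDiffOn hu i).differentiableOn (by simp)) x hx).hasFDerivWithinAt

lemma v_hasFDeriv (hu : ContDiffOn ℝ (⊤ : ℕ∞) u (closedHalf n)) (c : ℝ)
    {x : EuclideanSpace ℝ (Fin n)} (hx : x ∈ closedHalf n) :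
    HasFDerivWithinAt (fun y => Wel n u y + c * pd n u 0 y)
      ((1 / (2 * Wel n u x)) • (∑ i, (2 * pd n u i x) •
          fderivWithin ℝ (pd n u i) (closedHalf n) x) +
        c • fderivWithin ℝ (pd n u 0) (closedHalf n) x)
      (closedHalf n) x := by
  have hgs : HasFDerivWithinAt (fun y => 1 + gradSq n u y)
      (∑ i, (2 * pd n u i x) • fderivWithin ℝ (pd n u i) (closedHalf n) x)
      (closedHalf n) x := by
    have : HasFDerivWithinAt (gradSq n u)
        (∑ i, (2 * pd n u i x) • fderivWithin ℝ (pd n u i) (closedHalf n) x)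
        (closedHalf n) x := by
      apply HasFDerivWithinAt.fun_sum
      intro i _
      have h := (pd_diff hu i hx).fun_mul (pd_diff hu i hx)
      have e2 : (2 * pd n u i x) • fderivWithin ℝ (pd n u i) (closedHalf n) x
          = pd n u i x • fderivWithin ℝ (pd n u i) (closedHalf n) x
            + pd n u i x • fderivWithin ℝ (pd n u i) (closedHalf n) x := by
        rw [← add_smul]; ring_nf
      rw [e2]
      simpa [pow_two] using h
    simpa using this.const_add 1
  have hW : HasFDerivWithinAt (Wel n u)
      ((1 / (2 * Wel n u x)) • (∑ i, (2 * pd n u i x) •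
        fderivWithin ℝ (pd n u i) (closedHalf n) x)) (closedHalf n) x := by
    have := hgs.sqrt (ne_of_gt (one_add_gradSq_pos x))
    exact this
  exact hW.add ((pd_diff hu 0 hx).const_mul c)

lemma pd_v_eq (hu : ContDiffOn ℝ (⊤ : ℕ∞) u (closedHalf n)) (c : ℝ) (j : Fin n)
    {x : EuclideanSpace ℝ (Fin n)} (hx : x ∈ closedHalf n) :
    pd n (fun y => Wel n u y + c * pd n u 0 y) j x =
      (∑ i, pd n u i x * pd n (pd n u i) j x) / Wel n u x
        + c * pd n (pd n u 0) j x := by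
  have h := (v_hasFDeriv hu c hx).fderivWithin (uniqueDiffOn_closedHalf x hx)
  have : pd n (fun y => Wel n u y + c * pd n u 0 y) j x =
      ((1 / (2 * Wel n u x)) • (∑ i, (2 * pd n u i x) •
          fderivWithin ℝ (pd n u i) (closedHalf n) x) +
        c • fderivWithin ℝ (pd n u 0) (closedHalf n) x) (EuclideanSpace.single j 1) := by
    rw [pd, h]
  rw [this]
  have hW := @Wel_pos n _ u x
  simp only [ContinuousLinearMap.add_apply, ContinuousLinearMap.smul_apply,
    ContinuousLinearMap.sum_apply, pd, smul_eq_mul, Finset.mul_sum]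
  rw [Finset.sum_div]
  congr 1
  apply Finset.sum_congr rfl
  intro i _
  field_simp

lemma pd_pd_eq_snd (hu : ContDiffOn ℝ (⊤ : ℕ∞) u (closedHalf n)) (i j : Fin n)
    {x : EuclideanSpace ℝ (Fin n)} (hx : x ∈ closedHalf n) :
    pd n (pd n u i) j x =
      fderivWithin ℝ (fderivWithin ℝ u (closedHalf n)) (closedHalf n) x
        (EuclideanSpace.single j 1) (EuclideanSpace.single i 1) := by
  have h1 : ContDiffOn ℝ (⊤ : ℕ∞) (fderivWithin ℝ u (closedHalf n)) (closedHalf n) :=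
    hu.fderivWithin uniqueDiffOn_closedHalf (by exact_mod_cast le_top)
  have hF : DifferentiableWithinAt ℝ (fderivWithin ℝ u (closedHalf n)) (closedHalf n) x :=
    (h1.differentiableOn (by simp)) x hx
  have : pd n u i = (ContinuousLinearMap.apply ℝ ℝ (EuclideanSpace.single i 1)) ∘
      (fderivWithin ℝ u (closedHalf n)) := rfl
  rw [pd, this, fderiv_comp_fderivWithin _ (ContinuousLinearMap.apply ℝ ℝ
      (EuclideanSpace.single i 1)).differentiableAt hF (uniqueDiffOn_closedHalf x hx)]
  simp

lemma pd_pd_symm (hu : ContDiffOn ℝ (⊤ : ℕ∞) u (closedHalf n)) (i j : Fin n)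
    {x : EuclideanSpace ℝ (Fin n)} (hx : x ∈ closedHalf n) :
    pd n (pd n u i) j x = pd n (pd n u j) i x := by
  rw [pd_pd_eq_snd hu i j hx, pd_pd_eq_snd hu j i hx]
  exact (hu x hx).isSymmSndFDerivWithinAt (by rw [minSmoothness_of_isRCLikeNormedField]; exact WithTop.coe_le_coe.2 (le_top : (2:ℕ∞) ≤ ⊤))
    uniqueDiffOn_closedHalf (mem_closure_interior_closedHalf hx) hx _ _

lemma Wel_hasFDeriv (hu : ContDiffOn ℝ (⊤ : ℕ∞) u (closedHalf n))
    {x : EuclideanSpace ℝ (Fin n)} (hx : x ∈ closedHalf n) :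
    HasFDerivWithinAt (Wel n u)
      ((1 / (2 * Wel n u x)) • (∑ i, (2 * pd n u i x) •
        fderivWithin ℝ (pd n u i) (closedHalf n) x)) (closedHalf n) x := by
  have hgs : HasFDerivWithinAt (fun y => 1 + gradSq n u y)
      (∑ i, (2 * pd n u i x) • fderivWithin ℝ (pd n u i) (closedHalf n) x)
      (closedHalf n) x := by
    have : HasFDerivWithinAt (gradSq n u)
        (∑ i, (2 * pd n u i x) • fderivWithin ℝ (pd n u i) (closedHalf n) x)
        (closedHalf n) x := by
      apply HasFDerivWithinAt.fun_sum
      intro i _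
      have h := (pd_diff hu i hx).fun_mul (pd_diff hu i hx)
      have e2 : (2 * pd n u i x) • fderivWithin ℝ (pd n u i) (closedHalf n) x
          = pd n u i x • fderivWithin ℝ (pd n u i) (closedHalf n) x
            + pd n u i x • fderivWithin ℝ (pd n u i) (closedHalf n) x := by
        rw [← add_smul]; ring_nf
      rw [e2]
      simpa [pow_two] using h
    simpa using this.const_add 1
  exact hgs.sqrt (ne_of_gt (one_add_gradSq_pos x))

lemma eval_formula (hu : ContDiffOn ℝ (⊤ : ℕ∞) u (closedHalf n)) (c : ℝ) (j : Fin n)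
    {x : EuclideanSpace ℝ (Fin n)} (hx : x ∈ closedHalf n) :
    (fderivWithin ℝ (pd n u 0) (closedHalf n) x +
      c • ((1 / (2 * Wel n u x)) • (∑ i, (2 * pd n u i x) •
        fderivWithin ℝ (pd n u i) (closedHalf n) x))) (EuclideanSpace.single j 1)
      = pd n (pd n u 0) j x
        + c * ((∑ i, pd n u i x * pd n (pd n u i) j x) / Wel n u x) := by
  have hW := @Wel_pos n _ u x
  simp only [ContinuousLinearMap.add_apply, ContinuousLinearMap.smul_apply,
    ContinuousLinearMap.sum_apply, pd, smul_eq_mul, Finset.mul_sum]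
  rw [Finset.sum_div, Finset.mul_sum]
  congr 1
  apply Finset.sum_congr rfl
  intro i _
  field_simp

lemma boundary_rel (hu : ContDiffOn ℝ (⊤ : ℕ∞) u (closedHalf n)) {c : ℝ}
    (hcap : ∀ y : EuclideanSpace ℝ (Fin n), y 0 = 0 → pd n u 0 y = -c * Wel n u y)
    {x : EuclideanSpace ℝ (Fin n)} (hx0 : x 0 = 0) {j : Fin n} (hj : j ≠ 0) :
    pd n (pd n u 0) j x
      + c * ((∑ i, pd n u i x * pd n (pd n u i) j x) / Wel n u x) = 0 := by
  have hx : x ∈ closedHalf n := by simp [closedHalf, hx0]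
  set G := fderivWithin ℝ (pd n u 0) (closedHalf n) x +
      c • ((1 / (2 * Wel n u x)) • (∑ i, (2 * pd n u i x) •
        fderivWithin ℝ (pd n u i) (closedHalf n) x)) with hG
  have hg : HasFDerivWithinAt (fun y => pd n u 0 y + c * Wel n u y) G (closedHalf n) x :=
    (pd_diff hu 0 hx).add ((Wel_hasFDeriv hu hx).const_mul c)
  set e : EuclideanSpace ℝ (Fin n) := EuclideanSpace.single j 1 with he
  set γ : ℝ → EuclideanSpace ℝ (Fin n) := fun t => x + t • e with hγdef
  have hγ0 : ∀ t, (γ t) 0 = 0 := by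
    intro t
    have : (γ t) 0 = x 0 + t * e 0 := rfl
    rw [this, hx0, he]
    simp [EuclideanSpace.single_apply, Ne.symm hj]
  have hγ : HasDerivAt γ e 0 := by
    have := ((hasDerivAt_id (0:ℝ)).smul_const e).const_add x
    rw [one_smul] at this; exact this
  have hmaps : MapsTo γ univ (closedHalf n) := by
    intro t _
    simp only [closedHalf, mem_setOf_eq, hγ0 t, le_refl]
  have hcomp : HasDerivWithinAt ((fun y => pd n u 0 y + c * Wel n u y) ∘ γ) (G e) univ 0 := by
    apply hg.comp_hasDerivWithinAt_of_eq 0 hγ.hasDerivWithinAt hmaps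
    simp [hγdef]
  have hzero : ((fun y => pd n u 0 y + c * Wel n u y) ∘ γ) = fun _ => (0:ℝ) := by
    funext t
    simp only [Function.comp_apply]
    rw [hcap (γ t) (hγ0 t)]
    ring
  rw [hzero] at hcomp
  have : G e = 0 := by
    have h2 : HasDerivAt (fun _ : ℝ => (0:ℝ)) 0 0 := hasDerivAt_const 0 0
    exact (hasDerivWithinAt_univ.1 hcomp).unique h2
  rw [← eval_formula hu c j hx, ← he, ← hG, this]

end AuxUG

/-- **Ural'tseva–Gerhardt property of the capillary area element.**
If `u` is smooth on the closed half-space and satisfies the capillary boundary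
condition, then on the boundary `{x₁ = 0}` the function
`v = √(1+|Du|²) + cos θ · ∂₁u` satisfies
`∑ⱼ (δ_{1j} − ∂₁u ∂ⱼu/(1+|Du|²)) ∂ⱼv = 0`; equivalently
`(1 + ∑_{i≥2} (∂ᵢu)²) ∂₁v = ∂₁u · ∑_{i≥2} ∂ᵢu ∂ᵢv`. -/
theorem conormal_derivative_of_area_element_vanishes (n : ℕ) [NeZero n] (hn : 2 ≤ n)
    (θ : ℝ) (hθ : θ ∈ Set.Ioo 0 π)
    (u : EuclideanSpace ℝ (Fin n) → ℝ)
    (hsmooth : ContDiffOn ℝ (⊤ : ℕ∞) u (closedHalf n))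
    (hcap : ∀ x : EuclideanSpace ℝ (Fin n), x 0 = 0 →
      pd n u 0 x = -Real.cos θ * Wel n u x) :
    ∀ x : EuclideanSpace ℝ (Fin n), x 0 = 0 →
      (∑ j : Fin n,
        ((if j = (0 : Fin n) then (1 : ℝ) else 0) -
            pd n u 0 x * pd n u j x / (1 + gradSq n u x)) *
          pd n (fun y => Wel n u y + Real.cos θ * pd n u 0 y) j x = 0) ∧
      ((1 + ∑ i ∈ Finset.univ.erase (0 : Fin n), (pd n u i x) ^ 2) *
          pd n (fun y => Wel n u y + Real.cos θ * pd n u 0 y) 0 x =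
        pd n u 0 x * ∑ i ∈ Finset.univ.erase (0 : Fin n),
          pd n u i x * pd n (fun y => Wel n u y + Real.cos θ * pd n u 0 y) i x) := by
  
  intro x hx0
  have hx : x ∈ closedHalf n := by simp [closedHalf, hx0]
  have hWpos : 0 < Wel n u x := Wel_pos x
  have hWne : Wel n u x ≠ 0 := ne_of_gt hWpos
  have hcap' : ∀ y : EuclideanSpace ℝ (Fin n), y 0 = 0 →
      pd n u 0 y = -Real.cos θ * Wel n u y := hcap
  have hv : ∀ j : Fin n,
      pd n (fun y => Wel n u y + Real.cos θ * pd n u 0 y) j x =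
        (∑ i, pd n u i x * pd n (pd n u i) j x) / Wel n u x
          + Real.cos θ * pd n (pd n u 0) j x :=
    fun j => pd_v_eq hsmooth (Real.cos θ) j hx
  have hb : ∀ j : Fin n, j ≠ 0 →
      pd n (pd n u 0) j x =
        -(Real.cos θ * ((∑ i, pd n u i x * pd n (pd n u i) j x) / Wel n u x)) := by
    intro j hj
    have := boundary_rel hsmooth hcap' hx0 hj
    linarith
  have hsym : ∀ i j : Fin n, pd n (pd n u i) j x = pd n (pd n u j) i x :=
    fun i j => pd_pd_symm hsmooth i j hx
  have hp0 : pd n u 0 x = -Real.cos θ * Wel n u x := hcap x hx0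
  have hW2 : Wel n u x ^ 2 = 1 + gradSq n u x := Wel_sq x
  set T : ℝ := ∑ i ∈ Finset.univ.erase (0 : Fin n),
      pd n u i x * (∑ k, pd n u k x * pd n (pd n u k) i x) with hT
  have hS0 : (∑ i, pd n u i x * pd n (pd n u i) 0 x)
      = pd n u 0 x * pd n (pd n u 0) 0 x - Real.cos θ / Wel n u x * T := by
    rw [← Finset.add_sum_erase Finset.univ _ (Finset.mem_univ (0 : Fin n))]
    have hcg : ∀ i ∈ Finset.univ.erase (0 : Fin n),
        pd n u i x * pd n (pd n u i) 0 x
          = -(Real.cos θ / Wel n u x) *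
              (pd n u i x * (∑ k, pd n u k x * pd n (pd n u k) i x)) := by
      intro i hi
      have hi0 : i ≠ 0 := (Finset.mem_erase.1 hi).1
      rw [hsym i 0, hb i hi0]
      field_simp
    rw [Finset.sum_congr rfl hcg, ← Finset.mul_sum, ← hT]
    ring
  have hq0 : pd n (fun y => Wel n u y + Real.cos θ * pd n u 0 y) 0 x
      = -(Real.cos θ * T) / Wel n u x ^ 2 := by
    rw [hv 0, hS0, hp0]
    field_simp
    ring
  have hqj : ∀ j : Fin n, j ≠ 0 →
      pd n (fun y => Wel n u y + Real.cos θ * pd n u 0 y) j x =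
        (1 - Real.cos θ ^ 2) *
          ((∑ i, pd n u i x * pd n (pd n u i) j x) / Wel n u x) := by
    intro j hj
    rw [hv j, hb j hj]
    ring
  constructor
  · rw [← Finset.add_sum_erase Finset.univ _ (Finset.mem_univ (0 : Fin n))]
    have herase : ∀ j ∈ Finset.univ.erase (0 : Fin n),
        ((if j = (0 : Fin n) then (1 : ℝ) else 0) -
            pd n u 0 x * pd n u j x / (1 + gradSq n u x)) *
          pd n (fun y => Wel n u y + Real.cos θ * pd n u 0 y) j x =
        (-(pd n u 0 x / (1 + gradSq n u x)) * ((1 - Real.cos θ ^ 2) / Wel n u x)) *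
          (pd n u j x * (∑ i, pd n u i x * pd n (pd n u i) j x)) := by
      intro j hj
      have hj0 : j ≠ 0 := (Finset.mem_erase.1 hj).1
      rw [if_neg hj0, hqj j hj0]
      ring
    rw [Finset.sum_congr rfl herase, ← Finset.mul_sum]
    have hTsum : ∑ j ∈ Finset.univ.erase (0 : Fin n),
        pd n u j x * (∑ i, pd n u i x * pd n (pd n u i) j x) = T := by
      rw [hT]
    rw [hTsum, hq0, if_pos rfl, ← hW2, hp0]
    field_simp
    ring
  · have hsum2 : ∑ i ∈ Finset.univ.erase (0 : Fin n), (pd n u i x) ^ 2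
        = Wel n u x ^ 2 - 1 - (pd n u 0 x) ^ 2 := by
      have : gradSq n u x = (pd n u 0 x) ^ 2 +
          ∑ i ∈ Finset.univ.erase (0 : Fin n), (pd n u i x) ^ 2 := by
        rw [gradSq, ← Finset.add_sum_erase Finset.univ _ (Finset.mem_univ (0 : Fin n))]
      rw [hW2, this]
      ring
    have hrhs : ∀ i ∈ Finset.univ.erase (0 : Fin n),
        pd n u i x * pd n (fun y => Wel n u y + Real.cos θ * pd n u 0 y) i x =
          ((1 - Real.cos θ ^ 2) / Wel n u x) *
            (pd n u i x * (∑ k, pd n u k x * pd n (pd n u k) i x)) := by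
      intro i hi
      have hi0 : i ≠ 0 := (Finset.mem_erase.1 hi).1
      rw [hqj i hi0]
      ring
    rw [Finset.sum_congr rfl hrhs, ← Finset.mul_sum, ← hT, hsum2, hq0, hp0]
    field_simp
    ring
end

section
/- Let n ≥ 2, θ ∈ (0, π) and r > 0, and consider Q(x) = 1 − ((x₁ − |cos θ|·r)² + sin²θ·|x'|²)/r², ψ = Q², and the regions E_r and E_{θ,r}. Then: (1) E_{θ,r} ⊆ E_r; (2) for every x ∈ E_{θ,r}, (1 − (1+|cos θ|)²/4)² < ψ(x) ≤ 1; (3) ψ(x) = 0 for every x in the relative boundary of E_r in the open half-space (i.e. x₁ > 0 and (x₁ − |cos θ|·r)² + sin²θ|x'|² = r²); (4) for every x ∈ ∂ℝⁿ₊ with Q(x) ≥ 0, ∂₁ψ(x) = 4·ψ(x)^{1/2}·|cos θ|/r; (5) |Dψ(x)| ≤ 4 ψ(x)^{1/2}/r for all x ∈ E_r; and (6) there exists a constant c_{n,θ} > 0 depending only on n and θ with |D²ψ(x)| ≤ c_{n,θ}/r² for all x ∈ E_r. -/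
open Real Set
open scoped RealInnerProductSpace

noncomputable section

/-- `|x'|²`: squared norm of the tangential part of `x = (x₁, x')`. -/
def primeSq (n : ℕ) [NeZero n] (x : EuclideanSpace ℝ (Fin n)) : ℝ :=
  ∑ i ∈ Finset.univ.erase (0 : Fin n), (x i) ^ 2

/-- The ellipsoidal region `E_r`. -/
def Ereg (n : ℕ) [NeZero n] (θ r : ℝ) : Set (EuclideanSpace ℝ (Fin n)) :=
  {x | 0 < x 0 ∧
    (x 0 - |Real.cos θ| * r) ^ 2 + Real.sin θ ^ 2 * primeSq n x < r ^ 2}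

/-- The inner ellipsoidal region `E_{θ,r}`. -/
def Etheta (n : ℕ) [NeZero n] (θ r : ℝ) : Set (EuclideanSpace ℝ (Fin n)) :=
  {x | 0 < x 0 ∧
    (x 0 - |Real.cos θ| * r) ^ 2 + Real.sin θ ^ 2 * primeSq n x
      < ((1 + |Real.cos θ|) * r / 2) ^ 2}

/-- `Q(x) = 1 − ((x₁ − |cos θ| r)² + sin²θ |x'|²)/r²`. -/
def ellQ (n : ℕ) [NeZero n] (θ r : ℝ) (x : EuclideanSpace ℝ (Fin n)) : ℝ :=
  1 - ((x 0 - |Real.cos θ| * r) ^ 2 + Real.sin θ ^ 2 * primeSq n x) / r ^ 2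

/-- The cut-off function `ψ = Q²`. -/
def ellPsi (n : ℕ) [NeZero n] (θ r : ℝ) (x : EuclideanSpace ℝ (Fin n)) : ℝ :=
  (ellQ n θ r x) ^ 2

end

set_option maxHeartbeats 1000000

noncomputable section
namespace CutoffAux


variable {n : ℕ} [NeZero n] {θ r : ℝ}

/-- diagonal coefficients -/
def dco (θ : ℝ) {n : ℕ} [NeZero n] (i : Fin n) : ℝ := if i = 0 then 1 else Real.sin θ ^ 2

/-- center coordinates -/
def bco (θ r : ℝ) {n : ℕ} [NeZero n] (i : Fin n) : ℝ := if i = 0 then |Real.cos θ| * r else 0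

lemma dco_nonneg (i : Fin n) : 0 ≤ dco θ i := by
  unfold dco; split <;> positivity

lemma dco_le_one (i : Fin n) : dco θ i ≤ 1 := by
  unfold dco; split
  · exact le_rfl
  · exact Real.sin_sq_le_one θ

/-- the quadratic form -/
def aA (θ r : ℝ) {n : ℕ} [NeZero n] (x : EuclideanSpace ℝ (Fin n)) : ℝ :=
  (x 0 - |Real.cos θ| * r) ^ 2 + Real.sin θ ^ 2 * primeSq n x

lemma ellQ_eq (x : EuclideanSpace ℝ (Fin n)) : ellQ n θ r x = 1 - aA θ r x / r ^ 2 := rfl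

lemma aA_eq_sum (x : EuclideanSpace ℝ (Fin n)) :
    aA θ r x = ∑ i, dco θ i * (x i - bco θ r i) ^ 2 := by
  rw [← Finset.add_sum_erase _ _ (Finset.mem_univ (0 : Fin n)),
    Finset.sum_congr rfl (fun i hi => show dco θ i * (x i - bco θ r i) ^ 2
      = Real.sin θ ^ 2 * (x i) ^ 2 by
        unfold dco bco
        rw [if_neg (Finset.ne_of_mem_erase hi), if_neg (Finset.ne_of_mem_erase hi)]
        ring)]
  unfold aA dco bco primeSq
  simp only [if_pos rfl, one_mul]
  rw [Finset.mul_sum]; simp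

lemma aA_nonneg (x : EuclideanSpace ℝ (Fin n)) : 0 ≤ aA θ r x := by
  rw [aA_eq_sum]
  exact Finset.sum_nonneg fun i _ => mul_nonneg (dco_nonneg i) (sq_nonneg _)

/-- gradient-direction vector -/
def wv (θ r : ℝ) {n : ℕ} [NeZero n] (x : EuclideanSpace ℝ (Fin n)) : EuclideanSpace ℝ (Fin n) :=
  (EuclideanSpace.equiv (Fin n) ℝ).symm (fun i => dco θ i * (x i - bco θ r i))

lemma wv_apply (x : EuclideanSpace ℝ (Fin n)) (i : Fin n) :
    wv θ r x i = dco θ i * (x i - bco θ r i) := rfl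

lemma norm_sq_eq (x : EuclideanSpace ℝ (Fin n)) : ‖x‖ ^ 2 = ∑ i, (x i) ^ 2 := by
  rw [EuclideanSpace.norm_eq, Real.sq_sqrt (by positivity)]
  exact Finset.sum_congr rfl fun i _ => by rw [Real.norm_eq_abs, sq_abs]

lemma le_of_sq_le_sq {a b : ℝ} (hb : 0 ≤ b) (h : a ^ 2 ≤ b ^ 2) (ha : 0 ≤ a) : a ≤ b := by
  nlinarith

lemma norm_wv_sq_le (x : EuclideanSpace ℝ (Fin n)) : ‖wv θ r x‖ ^ 2 ≤ aA θ r x := by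
  rw [norm_sq_eq, aA_eq_sum]
  refine Finset.sum_le_sum fun i _ => ?_
  rw [wv_apply]
  have h1 := dco_nonneg (θ := θ) (n := n) i
  have h2 := dco_le_one (θ := θ) (n := n) i
  nlinarith [mul_nonneg (mul_nonneg h1 (sq_nonneg (x i - bco θ r i))) (sub_nonneg.2 h2)]

/-- diagonal continuous linear map -/
def Tc (θ : ℝ) (n : ℕ) [NeZero n] : EuclideanSpace ℝ (Fin n) →L[ℝ] EuclideanSpace ℝ (Fin n) :=
  LinearMap.toContinuousLinearMap
  { toFun := fun x => (EuclideanSpace.equiv (Fin n) ℝ).symm (fun i => dco θ i * x i)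
    map_add' := fun x y => by
      apply PiLp.ext; intro i
      show dco θ i * (x i + y i) = dco θ i * x i + dco θ i * y i
      ring
    map_smul' := fun c x => by
      apply PiLp.ext; intro i
      show dco θ i * (c * x i) = c * (dco θ i * x i)
      ring }

lemma Tc_apply (x : EuclideanSpace ℝ (Fin n)) (i : Fin n) : Tc θ n x i = dco θ i * x i := rfl

lemma norm_Tc_le (v : EuclideanSpace ℝ (Fin n)) : ‖Tc θ n v‖ ≤ ‖v‖ := by
  refine le_of_sq_le_sq (norm_nonneg _) ?_ (norm_nonneg _)
  rw [norm_sq_eq, norm_sq_eq]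
  refine Finset.sum_le_sum fun i _ => ?_
  rw [Tc_apply]
  have h1 := dco_nonneg (θ := θ) (n := n) i
  have h2 := dco_le_one (θ := θ) (n := n) i
  nlinarith [mul_nonneg (mul_nonneg h1 (sq_nonneg (v i))) (sub_nonneg.2 h2)]

lemma hasFDerivAt_aA (x : EuclideanSpace ℝ (Fin n)) :
    HasFDerivAt (aA θ r) ((2:ℝ) • innerSL ℝ (wv θ r x)) x := by
  have h : ∀ i ∈ (Finset.univ : Finset (Fin n)), HasFDerivAt
      (fun y : EuclideanSpace ℝ (Fin n) =>
        dco θ i * (((EuclideanSpace.proj i) y - bco θ r i) * ((EuclideanSpace.proj i) y - bco θ r i)))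
      (dco θ i • (((EuclideanSpace.proj i) x - bco θ r i) • (EuclideanSpace.proj (𝕜 := ℝ) i)
        + ((EuclideanSpace.proj i) x - bco θ r i) • (EuclideanSpace.proj i))) x := by
    intro i _
    have hsub := ((EuclideanSpace.proj (𝕜 := ℝ) i).hasFDerivAt (x := x)).sub_const (bco θ r i)
    exact (hsub.mul hsub).const_mul _
  have hsum := HasFDerivAt.fun_sum h
  have hfun : (fun y : EuclideanSpace ℝ (Fin n) => ∑ i, dco θ i *
      (((EuclideanSpace.proj i) y - bco θ r i) * ((EuclideanSpace.proj i) y - bco θ r i))) = aA θ r := by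
    funext y
    rw [aA_eq_sum]
    exact Finset.sum_congr rfl fun i _ => by rw [sq]; rfl
  rw [hfun] at hsum
  refine HasFDerivAt.congr_fderiv hsum (Eq.symm ?_)
  refine ContinuousLinearMap.ext fun v => ?_
  simp only [ContinuousLinearMap.sum_apply, ContinuousLinearMap.smul_apply,
    ContinuousLinearMap.add_apply, innerSL_apply_apply, PiLp.inner_apply, RCLike.inner_apply,
    conj_trivial, wv_apply, smul_eq_mul, PiLp.proj_apply,
    Finset.mul_sum]
  exact Finset.sum_congr rfl fun i _ => by ring

lemma hasFDerivAt_ellQ (x : EuclideanSpace ℝ (Fin n)) :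
    HasFDerivAt (ellQ n θ r) ((-2 / r ^ 2) • innerSL ℝ (wv θ r x)) x := by
  have h := ((hasFDerivAt_aA (θ := θ) (r := r) x).const_mul ((r ^ 2)⁻¹)).const_sub 1
  have hfun : (fun y : EuclideanSpace ℝ (Fin n) => 1 - (r ^ 2)⁻¹ * aA θ r y) = ellQ n θ r := by
    funext y; rw [ellQ_eq]; ring
  rw [hfun] at h
  refine HasFDerivAt.congr_fderiv h (Eq.symm ?_)
  refine ContinuousLinearMap.ext fun (v : EuclideanSpace ℝ (Fin n)) => ?_
  simp only [ContinuousLinearMap.smul_apply, ContinuousLinearMap.neg_apply, smul_eq_mul]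
  ring

lemma hasFDerivAt_ellPsi (x : EuclideanSpace ℝ (Fin n)) :
    HasFDerivAt (ellPsi n θ r) (innerSL ℝ ((-4 * ellQ n θ r x / r ^ 2) • wv θ r x)) x := by
  have h := (hasFDerivAt_ellQ (n := n) (θ := θ) (r := r) x).fun_mul (hasFDerivAt_ellQ (n := n) (θ := θ) (r := r) x)
  have hfun : (fun y => ellQ n θ r y * ellQ n θ r y) = ellPsi n θ r := by
    funext y; rw [← sq]; rfl
  rw [hfun] at h
  refine HasFDerivAt.congr_fderiv h (Eq.symm ?_)
  refine ContinuousLinearMap.ext fun v => ?_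
  simp only [innerSL_apply_apply, ContinuousLinearMap.add_apply, ContinuousLinearMap.smul_apply,
    smul_eq_mul, real_inner_smul_left]
  ring

def J (n : ℕ) [NeZero n] : EuclideanSpace ℝ (Fin n) →L[ℝ] EuclideanSpace ℝ (Fin n) →L[ℝ] ℝ :=
  LinearMap.toContinuousLinearMap
  { toFun := fun g => innerSL ℝ g
    map_add' := fun g h => by refine ContinuousLinearMap.ext fun v => ?_; simp [inner_add_left]
    map_smul' := fun c g => by refine ContinuousLinearMap.ext fun v => ?_; simp [real_inner_smul_left] }

lemma J_apply (g : EuclideanSpace ℝ (Fin n)) : J n g = innerSL ℝ g := rfl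

def gradv (θ r : ℝ) {n : ℕ} [NeZero n] (x : EuclideanSpace ℝ (Fin n)) : EuclideanSpace ℝ (Fin n) :=
  (-4 * ellQ n θ r x / r ^ 2) • wv θ r x

lemma hasFDerivAt_coefc (x : EuclideanSpace ℝ (Fin n)) :
    HasFDerivAt (fun y : EuclideanSpace ℝ (Fin n) => -4 * ellQ n θ r y / r ^ 2)
      ((8 / r ^ 4) • innerSL ℝ (wv θ r x)) x := by
  have h := ((hasFDerivAt_ellQ (n := n) (θ := θ) (r := r) x).const_mul (-4)).const_mul ((r ^ 2)⁻¹)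
  have hfun : (fun y : EuclideanSpace ℝ (Fin n) => (r ^ 2)⁻¹ * (-4 * ellQ n θ r y))
      = fun y : EuclideanSpace ℝ (Fin n) => -4 * ellQ n θ r y / r ^ 2 := by
    funext y; ring
  rw [hfun] at h
  refine HasFDerivAt.congr_fderiv h (Eq.symm ?_)
  refine ContinuousLinearMap.ext fun (v : EuclideanSpace ℝ (Fin n)) => ?_
  simp only [ContinuousLinearMap.smul_apply, smul_eq_mul]
  ring

lemma hasFDerivAt_wv (x : EuclideanSpace ℝ (Fin n)) :
    HasFDerivAt (wv θ r (n := n)) (Tc θ n) x := by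
  have h := ((Tc θ n).hasFDerivAt (x := x)).sub_const
    (Tc θ n ((EuclideanSpace.equiv (Fin n) ℝ).symm (bco θ r)))
  have hfun : (fun y : EuclideanSpace ℝ (Fin n) =>
      Tc θ n y - Tc θ n ((EuclideanSpace.equiv (Fin n) ℝ).symm (bco θ r))) = wv θ r (n := n) := by
    funext y; apply PiLp.ext; intro i
    show Tc θ n y i - Tc θ n _ i = wv θ r y i
    rw [Tc_apply, Tc_apply, wv_apply]
    show dco θ i * y i - dco θ i * bco θ r i = _
    ring
  rw [hfun] at h; exact h

lemma hasFDerivAt_gradv (x : EuclideanSpace ℝ (Fin n)) :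
    HasFDerivAt (gradv θ r (n := n))
      ((-4 * ellQ n θ r x / r ^ 2) • Tc θ n
        + ((8 / r ^ 4) • innerSL ℝ (wv θ r x)).smulRight (wv θ r x)) x :=
  (hasFDerivAt_coefc x).smul (hasFDerivAt_wv x)

lemma fderiv_fderiv_ellPsi (x : EuclideanSpace ℝ (Fin n)) :
    fderiv ℝ (fderiv ℝ (ellPsi n θ r)) x = (J n).comp
      ((-4 * ellQ n θ r x / r ^ 2) • Tc θ n
        + ((8 / r ^ 4) • innerSL ℝ (wv θ r x)).smulRight (wv θ r x)) := by
  have h1 : fderiv ℝ (ellPsi n θ r) = fun y => J n (gradv θ r y) := by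
    funext y; rw [(hasFDerivAt_ellPsi y).fderiv]; rfl
  rw [h1]
  exact ((J n).hasFDerivAt.comp x (hasFDerivAt_gradv x)).fderiv


lemma ellQ_eq' (n : ℕ) [NeZero n] (θ r : ℝ) (x : EuclideanSpace ℝ (Fin n)) :
    ellQ n θ r x = 1 - aA θ r x / r ^ 2 := rfl

lemma aA_nonneg' (θ r : ℝ) {n : ℕ} [NeZero n] (x : EuclideanSpace ℝ (Fin n)) :
    0 ≤ aA θ r x := aA_nonneg x

lemma wv_apply0 (θ r : ℝ) {n : ℕ} [NeZero n] (x : EuclideanSpace ℝ (Fin n)) :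
    wv θ r x 0 = x 0 - |Real.cos θ| * r := by
  rw [wv_apply]; simp [dco, bco]

lemma norm_wv_sq_le' (θ r : ℝ) {n : ℕ} [NeZero n] (x : EuclideanSpace ℝ (Fin n)) :
    ‖wv θ r x‖ ^ 2 ≤ aA θ r x := norm_wv_sq_le x

lemma norm_Tc_le' (θ : ℝ) {n : ℕ} [NeZero n] (v : EuclideanSpace ℝ (Fin n)) :
    ‖Tc θ n v‖ ≤ ‖v‖ := norm_Tc_le v

lemma hasFDerivAt_ellPsi' (θ r : ℝ) {n : ℕ} [NeZero n] (x : EuclideanSpace ℝ (Fin n)) :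
    HasFDerivAt (ellPsi n θ r) (innerSL ℝ ((-4 * ellQ n θ r x / r ^ 2) • wv θ r x)) x :=
  hasFDerivAt_ellPsi x

lemma J_apply' (n : ℕ) [NeZero n] (g : EuclideanSpace ℝ (Fin n)) : J n g = innerSL ℝ g := rfl

lemma fderiv_fderiv_ellPsi' (θ r : ℝ) {n : ℕ} [NeZero n] (x : EuclideanSpace ℝ (Fin n)) :
    fderiv ℝ (fderiv ℝ (ellPsi n θ r)) x = (J n).comp
      ((-4 * ellQ n θ r x / r ^ 2) • Tc θ n
        + ((8 / r ^ 4) • innerSL ℝ (wv θ r x)).smulRight (wv θ r x)) :=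
  fderiv_fderiv_ellPsi x

lemma le_of_sq_le_sq' {a b : ℝ} (hb : 0 ≤ b) (h : a ^ 2 ≤ b ^ 2) (ha : 0 ≤ a) : a ≤ b := by
  nlinarith

end CutoffAux
end

open CutoffAux

/-- **Properties of the cut-off function** (Lemma 3.1).  With `Q, ψ, E_r, E_{θ,r}` as
above: (1) `E_{θ,r} ⊆ E_r`; (2) `(1−(1+|cos θ|)²/4)² < ψ ≤ 1` on `E_{θ,r}`;
(3) `ψ = 0` on the relative boundary of `E_r`; (4) `∂₁ψ = 4√ψ |cos θ|/r` on `∂ℝⁿ₊`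
(where `Q ≥ 0`); (5) `|Dψ| ≤ 4√ψ/r` on `E_r`; (6) `|D²ψ| ≤ c_{n,θ}/r²` on `E_r` for
a constant `c_{n,θ} > 0` depending only on `n, θ`. -/
theorem cutoff_function_properties (n : ℕ) [NeZero n] (hn : 2 ≤ n)
    (θ : ℝ) (hθ : θ ∈ Set.Ioo 0 π) :
    ∃ c > (0 : ℝ), ∀ r > (0 : ℝ),
      Etheta n θ r ⊆ Ereg n θ r ∧
      (∀ x ∈ Etheta n θ r,
        (1 - (1 + |Real.cos θ|) ^ 2 / 4) ^ 2 < ellPsi n θ r x ∧ ellPsi n θ r x ≤ 1) ∧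
      (∀ x : EuclideanSpace ℝ (Fin n), 0 < x 0 →
        (x 0 - |Real.cos θ| * r) ^ 2 + Real.sin θ ^ 2 * primeSq n x = r ^ 2 →
        ellPsi n θ r x = 0) ∧
      (∀ x : EuclideanSpace ℝ (Fin n), x 0 = 0 → 0 ≤ ellQ n θ r x →
        fderiv ℝ (ellPsi n θ r) x (EuclideanSpace.single 0 1) =
          4 * Real.sqrt (ellPsi n θ r x) * |Real.cos θ| / r) ∧
      (∀ x ∈ Ereg n θ r,
        ‖fderiv ℝ (ellPsi n θ r) x‖ ≤ 4 * Real.sqrt (ellPsi n θ r x) / r) ∧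
      (∀ x ∈ Ereg n θ r,
        ‖iteratedFDeriv ℝ 2 (ellPsi n θ r) x‖ ≤ c / r ^ 2) := by
  obtain ⟨hθ0, hθπ⟩ := hθ
  have hsin : 0 < Real.sin θ := Real.sin_pos_of_pos_of_lt_pi hθ0 hθπ
  have hcos1 : |Real.cos θ| < 1 := by
    nlinarith [sq_abs (Real.cos θ), Real.sin_sq_add_cos_sq θ, abs_nonneg (Real.cos θ),
      mul_pos hsin hsin]
  have hcos0 : (0:ℝ) ≤ |Real.cos θ| := abs_nonneg _
  have hlow : 0 < 1 - (1 + |Real.cos θ|) ^ 2 / 4 := by nlinarith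
  refine ⟨12, by norm_num, fun r hr => ?_⟩
  have hr0 : r ≠ 0 := ne_of_gt hr
  have hr2 : (0:ℝ) < r ^ 2 := by positivity
  -- basic fact: Q positive lower bound on E_r, etc.
  constructor
  · -- (1)
    intro x hx
    obtain ⟨hx1, hx2⟩ := hx
    refine ⟨hx1, lt_of_lt_of_le hx2 ?_⟩
    have h4 : (1 + |Real.cos θ|) ^ 2 ≤ 4 := by nlinarith
    nlinarith [sq_nonneg r]
  refine ⟨?_, ?_, ?_, ?_, ?_⟩
  · -- (2)
    intro x hx
    obtain ⟨hx1, hx2⟩ := hx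
    have hA2 : aA θ r x < ((1 + |Real.cos θ|) * r / 2) ^ 2 := hx2
    have hA0 : 0 ≤ aA θ r x := aA_nonneg' θ r x
    have hq : ellQ n θ r x = 1 - aA θ r x / r ^ 2 := ellQ_eq' n θ r x
    have hqlow : 1 - (1 + |Real.cos θ|) ^ 2 / 4 < ellQ n θ r x := by
      rw [hq]
      have : aA θ r x / r ^ 2 < (1 + |Real.cos θ|) ^ 2 / 4 := by
        rw [div_lt_iff₀ hr2]; nlinarith
      linarith
    have hq1 : ellQ n θ r x ≤ 1 := by
      rw [hq]
      have : 0 ≤ aA θ r x / r ^ 2 := div_nonneg hA0 hr2.le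
      linarith
    constructor
    · exact pow_lt_pow_left₀ hqlow hlow.le two_ne_zero
    · exact pow_le_one₀ (by linarith) hq1
  · -- (3)
    intro x _ heq
    have hq : ellQ n θ r x = 0 := by
      rw [ellQ_eq' n θ r x, show aA θ r x = r ^ 2 from heq, div_self (ne_of_gt hr2), sub_self]
    show ellQ n θ r x ^ 2 = 0
    rw [hq]; ring
  · -- (4)
    intro x hx0 hq0
    rw [(hasFDerivAt_ellPsi' θ r x).fderiv]
    rw [innerSL_apply_apply, real_inner_smul_left, EuclideanSpace.inner_single_right]
    have hs : Real.sqrt (ellPsi n θ r x) = ellQ n θ r x := by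
      rw [show ellPsi n θ r x = ellQ n θ r x ^ 2 from rfl, Real.sqrt_sq_eq_abs,
        abs_of_nonneg hq0]
    rw [hs, wv_apply0, hx0]
    simp only [map_sub, map_mul, RingHom.id_apply, starRingEnd_apply, star_trivial]
    field_simp
    ring
  · -- (5)
    intro x hx
    obtain ⟨hx1, hx2⟩ := hx
    have hA2 : aA θ r x < r ^ 2 := hx2
    have hA0 : 0 ≤ aA θ r x := aA_nonneg' θ r x
    have hq0 : 0 ≤ ellQ n θ r x := by
      rw [ellQ_eq' n θ r x]
      have : aA θ r x / r ^ 2 ≤ 1 := by rw [div_le_one hr2]; linarith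
      linarith
    have hs : Real.sqrt (ellPsi n θ r x) = ellQ n θ r x := by
      rw [show ellPsi n θ r x = ellQ n θ r x ^ 2 from rfl, Real.sqrt_sq_eq_abs,
        abs_of_nonneg hq0]
    have hwle : ‖wv θ r x‖ ≤ r := by
      refine le_of_sq_le_sq' hr.le ?_ (norm_nonneg _)
      exact le_trans (norm_wv_sq_le' θ r x) hA2.le
    rw [(hasFDerivAt_ellPsi' θ r x).fderiv, innerSL_apply_norm, norm_smul, hs,
      Real.norm_eq_abs]
    have habs : |(-4 * ellQ n θ r x / r ^ 2)| = 4 * ellQ n θ r x / r ^ 2 := by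
      rw [abs_of_nonpos (div_nonpos_of_nonpos_of_nonneg (by nlinarith) hr2.le)]
      ring
    rw [habs]
    have hc0 : 0 ≤ 4 * ellQ n θ r x / r ^ 2 := div_nonneg (by linarith) hr2.le
    calc 4 * ellQ n θ r x / r ^ 2 * ‖wv θ r x‖
        ≤ 4 * ellQ n θ r x / r ^ 2 * r := mul_le_mul_of_nonneg_left hwle hc0
      _ = 4 * ellQ n θ r x / r := by field_simp
  · -- (6)
    intro x hx
    obtain ⟨hx1, hx2⟩ := hx
    have hA2 : aA θ r x < r ^ 2 := hx2
    have hA0 : 0 ≤ aA θ r x := aA_nonneg' θ r x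
    have hq0 : 0 ≤ ellQ n θ r x := by
      rw [ellQ_eq' n θ r x]
      have : aA θ r x / r ^ 2 ≤ 1 := by rw [div_le_one hr2]; linarith
      linarith
    have hq1 : ellQ n θ r x ≤ 1 := by
      rw [ellQ_eq' n θ r x]
      have : 0 ≤ aA θ r x / r ^ 2 := div_nonneg hA0 hr2.le
      linarith
    have hwle : ‖wv θ r x‖ ≤ r := by
      refine le_of_sq_le_sq' hr.le ?_ (norm_nonneg _)
      exact le_trans (norm_wv_sq_le' θ r x) hA2.le
    refine ContinuousMultilinearMap.opNorm_le_bound (by positivity) fun m => ?_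
    rw [iteratedFDeriv_two_apply, fderiv_fderiv_ellPsi' θ r x,
      ContinuousLinearMap.comp_apply, J_apply' n, innerSL_apply_apply]
    set G := (-4 * ellQ n θ r x / r ^ 2) • Tc θ n
        + ((8 / r ^ 4) • innerSL ℝ (wv θ r x)).smulRight (wv θ r x) with hG
    have hGv : ∀ v : EuclideanSpace ℝ (Fin n), ‖G v‖ ≤ 12 / r ^ 2 * ‖v‖ := by
      intro v
      rw [hG, ContinuousLinearMap.add_apply, ContinuousLinearMap.smul_apply,
        ContinuousLinearMap.smulRight_apply, ContinuousLinearMap.smul_apply, innerSL_apply_apply,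
        smul_eq_mul]
      refine le_trans (norm_add_le _ _) ?_
      rw [norm_smul, norm_smul, Real.norm_eq_abs, Real.norm_eq_abs]
      have h1 : |(-4 * ellQ n θ r x / r ^ 2)| ≤ 4 / r ^ 2 := by
        rw [abs_of_nonpos (div_nonpos_of_nonpos_of_nonneg (by nlinarith) hr2.le),
          show -(-4 * ellQ n θ r x / r ^ 2) = 4 * ellQ n θ r x / r ^ 2 by ring,
          div_le_div_iff₀ hr2 hr2]
        nlinarith
      have h2 : |8 / r ^ 4 * ⟪wv θ r x, v⟫| ≤ 8 / r ^ 4 * (r * ‖v‖) := by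
        rw [abs_mul, abs_of_pos (by positivity : (0:ℝ) < 8 / r ^ 4)]
        refine mul_le_mul_of_nonneg_left ?_ (by positivity)
        exact le_trans (abs_real_inner_le_norm _ _)
          (mul_le_mul_of_nonneg_right hwle (norm_nonneg _))
      have hT := norm_Tc_le' θ (n := n) v
      have e1 : |(-4 * ellQ n θ r x / r ^ 2)| * ‖Tc θ n v‖ ≤ 4 / r ^ 2 * ‖v‖ :=
        mul_le_mul h1 hT (norm_nonneg _) (by positivity)
      have e2 : |8 / r ^ 4 * ⟪wv θ r x, v⟫| * ‖wv θ r x‖ ≤ 8 / r ^ 4 * (r * ‖v‖) * r :=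
        mul_le_mul h2 hwle (norm_nonneg _) (by positivity)
      have : 8 / r ^ 4 * (r * ‖v‖) * r = 8 / r ^ 2 * ‖v‖ := by
        field_simp
      rw [this] at e2
      have : 4 / r ^ 2 * ‖v‖ + 8 / r ^ 2 * ‖v‖ = 12 / r ^ 2 * ‖v‖ := by ring
      linarith
    rw [Real.norm_eq_abs, Fin.prod_univ_two]
    calc |⟪G (m 0), m 1⟫| ≤ ‖G (m 0)‖ * ‖m 1‖ := abs_real_inner_le_norm _ _
      _ ≤ 12 / r ^ 2 * ‖m 0‖ * ‖m 1‖ := by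
          have := hGv (m 0)
          have h0 : (0:ℝ) ≤ ‖m 1‖ := norm_nonneg _
          nlinarith [norm_nonneg (m 0)]
      _ = 12 / r ^ 2 * (‖m 0‖ * ‖m 1‖) := by ring
end
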